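/- arXiv:1906.06648 — 3 statements merged into one kernel-verified Lean document; each statement's English description precedes it below -/
import Mathlib

section
/- Let φ : ℂ → ℂ be given by φ(z) = exp(T·ψ(z)) where ψ(z) = izμ − σ²z²/2 + ∫_{ℝ∖{0}} (e^{izx} − 1 − izx) ν(dx), with σ > 0, μ ∈ ℝ, T > 0, and ν a Lévy measure of the form ν(dx) = (γ/(√(2π)δ)) exp(−(x−m)²/(2δ²)) dx (Merton jump diffusion, γ, δ > 0, m ∈ ℝ). Fix α > 0 and set z_v = iv − α for v ∈ ℝ. Then there exists a constant C > 0 such that |φ(i z_v)| ≤ C exp(−σ²v²T/2) for all v ∈ ℝ. -/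
open MeasureTheory Complex
open scoped NNReal ENNReal

/-- The Lévy measure of a Merton jump-diffusion process:
`ν(dx) = γ/(√(2π) δ) exp(-(x-m)²/(2δ²)) dx`. -/
noncomputable def mertonMeasure (γ δ m : ℝ) : Measure ℝ :=
  MeasureTheory.volume.withDensity fun x => ENNReal.ofReal
    (γ / (Real.sqrt (2 * Real.pi) * δ) * Real.exp (-(x - m) ^ 2 / (2 * δ ^ 2)))

lemma aux_gauss_int (a m δ : ℝ) (hδ : 0 < δ) :
    MeasureTheory.Integrable (fun x : ℝ => Real.exp (a * x) * Real.exp (-(x - m)^2 / (2 * δ^2))) := by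
  have hb : (0:ℝ) < 1/(4*δ^2) := by positivity
  set D : ℝ := ((2*δ^2*a + 2*m)^2 - 2*m^2) / (4*δ^2) with hD
  have key : ∀ x : ℝ, a*x + (-(x-m)^2 / (2*δ^2)) ≤ D + (-(1/(4*δ^2)) * x^2) := by
    intro x
    have h4 : (0:ℝ) < 4*δ^2 := by positivity
    rw [hD, div_add' _ _ _ h4.ne']
    have hL : a*x + (-(x-m)^2 / (2*δ^2)) = (4*δ^2*(a*x) - 2*(x-m)^2) / (4*δ^2) := by
      field_simp; ring
    rw [hL, div_le_div_iff_of_pos_right h4]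
    have hs : -(1/(4*δ^2)) * x^2 * (4*δ^2) = -x^2 := by field_simp
    rw [hs]
    nlinarith [sq_nonneg (x - (2*δ^2*a + 2*m))]
  have base := (integrable_exp_neg_mul_sq hb).const_mul (Real.exp D)
  refine base.mono ?_ ?_
  · exact (Continuous.mul (by continuity) (by continuity)).aestronglyMeasurable
  · filter_upwards with x
    rw [Real.norm_eq_abs, Real.norm_eq_abs, abs_of_pos (by positivity),
      abs_of_pos (by positivity), ← Real.exp_add, ← Real.exp_add]
    exact Real.exp_le_exp.2 (key x)

lemma merton_integrable_iff {γ δ m : ℝ} (hγ : 0 ≤ γ) (hδ : 0 ≤ δ)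
    {E : Type*} [NormedAddCommGroup E] [NormedSpace ℝ E] (g : ℝ → E) :
    Integrable g (mertonMeasure γ δ m) ↔
      Integrable (fun x =>
        (γ / (Real.sqrt (2 * Real.pi) * δ) * Real.exp (-(x - m) ^ 2 / (2 * δ ^ 2))) • g x)
        volume := by
  have hnn : ∀ x : ℝ, 0 ≤ γ / (Real.sqrt (2 * Real.pi) * δ) * Real.exp (-(x - m) ^ 2 / (2 * δ ^ 2)) :=
    fun x => mul_nonneg (div_nonneg hγ (mul_nonneg (Real.sqrt_nonneg _) hδ)) (Real.exp_pos _).le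
  have hmeas : Measurable fun x : ℝ =>
      Real.toNNReal (γ / (Real.sqrt (2 * Real.pi) * δ) * Real.exp (-(x - m) ^ 2 / (2 * δ ^ 2))) := by
    measurability
  have hmm : mertonMeasure γ δ m = MeasureTheory.volume.withDensity
      (fun x => ((Real.toNNReal (γ / (Real.sqrt (2 * Real.pi) * δ) *
        Real.exp (-(x - m) ^ 2 / (2 * δ ^ 2))) : ℝ≥0) : ℝ≥0∞)) := rfl
  rw [hmm, integrable_withDensity_iff_integrable_smul hmeas]
  exact integrable_congr (Filter.Eventually.of_forall fun x => by
    simp only []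
    rw [NNReal.smul_def, Real.coe_toNNReal _ (hnn x)])

/-- Gaussian decay of the characteristic exponent of a Merton jump diffusion along the
complex line `z_v = iv - α`: `|φ(i z_v)| ≤ C exp(-σ² v² T / 2)` where
`φ(z) = exp(T ψ(z))`, `ψ(z) = izμ - σ²z²/2 + ∫ (e^{izx} - 1 - izx) ν(dx)`. -/
theorem stmt_1 (T μ m σ γ δ α : ℝ) (hσ : 0 < σ) (hγ : 0 < γ) (hδ : 0 < δ)
    (hT : 0 < T) (hα : 0 < α) :
    ∃ C > 0, ∀ v : ℝ,
      ‖Complex.exp ((T : ℂ) *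
        (Complex.I * (Complex.I * (Complex.I * (v : ℂ) - (α : ℂ))) * (μ : ℂ)
          - (σ : ℂ) ^ 2 * (Complex.I * (Complex.I * (v : ℂ) - (α : ℂ))) ^ 2 / 2
          + ∫ x : ℝ,
              (Complex.exp (Complex.I * (Complex.I * (Complex.I * (v : ℂ) - (α : ℂ))) * (x : ℂ))
                - 1 - Complex.I * (Complex.I * (Complex.I * (v : ℂ) - (α : ℂ))) * (x : ℂ))
              ∂(mertonMeasure γ δ m)))‖
        ≤ C * Real.exp (-σ ^ 2 * v ^ 2 * T / 2) := by
  set ν := mertonMeasure γ δ m with hν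
  set c : ℝ := γ / (Real.sqrt (2 * Real.pi) * δ) with hc
  set ρ : ℝ → ℝ := fun x => c * Real.exp (-(x - m) ^ 2 / (2 * δ ^ 2)) with hρ
  have hρnn : ∀ x, 0 ≤ ρ x :=
    fun x => mul_nonneg (div_nonneg hγ.le (mul_nonneg (Real.sqrt_nonneg _) hδ.le)) (Real.exp_pos _).le
  -- ρ times an exponential is integrable
  have hρexp : ∀ a : ℝ, Integrable (fun x : ℝ => ρ x * Real.exp (a * x)) volume := by
    intro a
    refine ((aux_gauss_int a m δ hδ).const_mul c).congr
      (Filter.Eventually.of_forall fun x => by simp only [hρ]; ring)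
  have habs : ∀ x : ℝ, |x| ≤ Real.exp x + Real.exp (-x) := by
    intro x
    rcases le_total 0 x with h | h
    · rw [_root_.abs_of_nonneg h]
      nlinarith [Real.add_one_le_exp x, (Real.exp_pos (-x)).le]
    · rw [abs_of_nonpos h]
      nlinarith [Real.add_one_le_exp (-x), (Real.exp_pos x).le]
  -- integrability of x with respect to ν
  have hx : Integrable (fun x : ℝ => (x : ℂ)) ν := by
    rw [hν, merton_integrable_iff hγ.le hδ.le]
    have hmaj : Integrable (fun x : ℝ => ρ x * Real.exp x + ρ x * Real.exp (-x)) volume := by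
      have := (hρexp 1).add (hρexp (-1))
      refine this.congr (Filter.Eventually.of_forall fun x => by
        simp only [Pi.add_apply, one_mul, neg_one_mul])
    refine hmaj.mono ?_ ?_
    · apply Continuous.aestronglyMeasurable
      fun_prop
    · filter_upwards with x
      have h1 : ‖(γ / (Real.sqrt (2 * Real.pi) * δ) * Real.exp (-(x - m) ^ 2 / (2 * δ ^ 2))) • (x : ℂ)‖
          = ρ x * |x| := by
        rw [norm_smul, Real.norm_eq_abs, _root_.abs_of_nonneg (hρnn x), Complex.norm_real,
          Real.norm_eq_abs]
      have hpos : (0:ℝ) ≤ ρ x * Real.exp x + ρ x * Real.exp (-x) :=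
        add_nonneg (mul_nonneg (hρnn x) (Real.exp_pos _).le)
          (mul_nonneg (hρnn x) (Real.exp_pos _).le)
      rw [h1, Real.norm_eq_abs, _root_.abs_of_nonneg hpos]
      have := mul_le_mul_of_nonneg_left (habs x) (hρnn x)
      linarith [this]
  -- integrability of exp (α x) + 1 with respect to ν
  have hK2int : Integrable (fun x : ℝ => Real.exp (α * x) + 1) ν := by
    rw [hν, merton_integrable_iff hγ.le hδ.le]
    have := (hρexp α).add (hρexp 0)
    refine this.congr (Filter.Eventually.of_forall fun x => ?_)
    simp only [Pi.add_apply, smul_eq_mul, zero_mul, Real.exp_zero]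
    ring
  set Mr : ℝ := ∫ x, x ∂ν with hMr
  set K2 : ℝ := ∫ x, (Real.exp (α * x) + 1) ∂ν with hK2
  set B : ℝ := α * μ + σ ^ 2 * α ^ 2 / 2 + K2 + α * |Mr| with hB
  refine ⟨Real.exp (T * B), Real.exp_pos _, fun v => ?_⟩
  set w : ℂ := Complex.I * (Complex.I * (Complex.I * (v : ℂ) - (α : ℂ))) with hwdef
  have hw : w = (α : ℂ) - (v : ℂ) * Complex.I := by
    rw [hwdef]; simp [Complex.ext_iff]
  have hre_wx : ∀ x : ℝ, (w * (x : ℂ)).re = α * x := by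
    intro x; rw [hw]; simp [Complex.mul_re]
  have hnorm_exp : ∀ x : ℝ, ‖Complex.exp (w * (x : ℂ)) - 1‖ ≤ Real.exp (α * x) + 1 := by
    intro x
    refine (norm_sub_le _ _).trans ?_
    rw [Complex.norm_exp, hre_wx x, norm_one]
  -- integrability of exp (w x) - 1 with respect to ν
  have h1 : Integrable (fun x : ℝ => Complex.exp (w * (x : ℂ)) - 1) ν := by
    rw [hν, merton_integrable_iff hγ.le hδ.le]
    have hmaj : Integrable (fun x : ℝ => ρ x * Real.exp (α * x) + ρ x * Real.exp (0 * x)) volume :=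
      (hρexp α).add (hρexp 0)
    refine hmaj.mono ?_ ?_
    · apply Continuous.aestronglyMeasurable
      fun_prop
    · filter_upwards with x
      have h1 : ‖(γ / (Real.sqrt (2 * Real.pi) * δ) * Real.exp (-(x - m) ^ 2 / (2 * δ ^ 2))) •
          (Complex.exp (w * (x : ℂ)) - 1)‖ = ρ x * ‖Complex.exp (w * (x : ℂ)) - 1‖ := by
        rw [norm_smul, Real.norm_eq_abs, _root_.abs_of_nonneg (hρnn x)]
      have hpos : (0:ℝ) ≤ ρ x * Real.exp (α * x) + ρ x * Real.exp (0 * x) :=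
        add_nonneg (mul_nonneg (hρnn x) (Real.exp_pos _).le)
          (mul_nonneg (hρnn x) (Real.exp_pos _).le)
      rw [h1, Real.norm_eq_abs, _root_.abs_of_nonneg hpos, zero_mul, Real.exp_zero, mul_one]
      have := mul_le_mul_of_nonneg_left (hnorm_exp x) (hρnn x)
      linarith [this]
  have hxw : Integrable (fun x : ℝ => w * (x : ℂ)) ν := hx.const_mul w
  have hsplit : (∫ x : ℝ, (Complex.exp (w * (x : ℂ)) - 1 - w * (x : ℂ)) ∂ν)
      = (∫ x : ℝ, (Complex.exp (w * (x : ℂ)) - 1) ∂ν) - w * ((Mr : ℝ) : ℂ) := by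
    have hMc : ∫ a : ℝ, ((a : ℂ)) ∂ν = ((Mr : ℝ) : ℂ) := by
      rw [hMr]; exact integral_ofReal
    rw [integral_sub h1 hxw, integral_const_mul, hMc]
  have hAre : (∫ x : ℝ, (Complex.exp (w * (x : ℂ)) - 1) ∂ν).re ≤ K2 := by
    refine le_trans (Complex.re_le_norm _) (le_trans ?_ (integral_mono h1.norm hK2int hnorm_exp))
    exact norm_integral_le_integral_norm _
  -- compute the real part of the exponent
  have hterm1 : (w * (μ : ℂ)).re = α * μ := by rw [hw]; simp [Complex.mul_re]
  have hterm2 : ((σ : ℂ) ^ 2 * (Complex.I * ((Complex.I * (v : ℂ) - (α : ℂ)))) ^ 2 / 2).re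
      = σ ^ 2 * (v ^ 2 - α ^ 2) / 2 := by
    have h2c : ((2:ℂ)) = ((2:ℝ):ℂ) := by norm_num
    rw [h2c, Complex.div_ofReal_re]
    have : ((σ : ℂ) ^ 2 * (Complex.I * ((Complex.I * (v : ℂ) - (α : ℂ)))) ^ 2).re
        = σ ^ 2 * (v ^ 2 - α ^ 2) := by
      simp only [pow_two, Complex.mul_re, Complex.mul_im, Complex.sub_re, Complex.sub_im,
        Complex.I_re, Complex.I_im, Complex.ofReal_re, Complex.ofReal_im]
      ring
    rw [this]
  have hterm3 : (w * ((Mr : ℝ) : ℂ)).re = α * Mr := by rw [hw]; simp [Complex.mul_re]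
  set ψ : ℂ := w * (μ : ℂ) - (σ : ℂ) ^ 2 * (Complex.I * ((Complex.I * (v : ℂ) - (α : ℂ)))) ^ 2 / 2
      + ∫ x : ℝ, (Complex.exp (w * (x : ℂ)) - 1 - w * (x : ℂ)) ∂ν with hψ
  have hψre : ψ.re ≤ B - σ ^ 2 * v ^ 2 / 2 := by
    rw [hψ, hsplit]
    rw [Complex.add_re, Complex.sub_re, Complex.sub_re, hterm1, hterm2, hterm3]
    have hMabs : -(α * Mr) ≤ α * |Mr| := by
      have := mul_le_mul_of_nonneg_left (neg_abs_le Mr) hα.le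
      nlinarith [this]
    rw [hB]
    nlinarith [hAre, hMabs]
  -- finish
  have hnorm : ‖Complex.exp ((T : ℂ) * ψ)‖ = Real.exp (T * ψ.re) := by
    rw [Complex.norm_exp]
    congr 1
    simp [Complex.mul_re]
  calc ‖Complex.exp ((T : ℂ) * ψ)‖ = Real.exp (T * ψ.re) := hnorm
    _ ≤ Real.exp (T * B) * Real.exp (-σ ^ 2 * v ^ 2 * T / 2) := by
        rw [← Real.exp_add]
        apply Real.exp_le_exp.2
        nlinarith [mul_le_mul_of_nonneg_left hψre hT.le]
end

section
/- Let ν be a measure on ℝ∖{0} with ∫ (x² ∧ 1) ν(dx) < ∞ and ∫_{[−1,1]∖{0}} |x| ν(dx) = ∞. Let X_T be a real random variable with bounded continuous density p, and let c ∈ ℝ with p(c) > 0. Then ∫_0^T ∫_{ℝ∖{0}} E[ |1_{X_T + x ≥ c} − 1_{X_T ≥ c}|² ] ν(dx) ds = ∞. Consequently (by the characterization of Solé–Utzet–Vives), 1_{X_T ≥ c} is not Malliavin differentiable (not in 𝔻^{1,2}) with respect to a pure-jump Lévy process with Lévy measure ν whose time-T marginal is X_T. -/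
open MeasureTheory Set
open scoped ENNReal

/-- If `ν` is a Lévy measure on `ℝ∖{0}` with `∫_{[-1,1]∖{0}} |x| ν(dx) = ∞` and `X_T` has
a bounded continuous density `p` with `p(c) > 0`, then the Malliavin-energy integral
`∫₀^T ∫ E[|1_{X_T + x ≥ c} - 1_{X_T ≥ c}|²] ν(dx) ds` diverges (hence, by the
Solé–Utzet–Vives criterion, `1_{X_T ≥ c} ∉ 𝔻^{1,2}`). -/
theorem stmt_12 {Ω : Type*} [MeasurableSpace Ω] (P : Measure Ω) [IsProbabilityMeasure P]
    (ν : Measure ℝ) (hν0 : ν {0} = 0)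
    (hν1 : ∫⁻ x : ℝ, ENNReal.ofReal (min (x ^ 2) 1) ∂ν < ⊤)
    (hνdiv : ∫⁻ x in Set.Icc (-1 : ℝ) 1 \ {0}, ENNReal.ofReal |x| ∂ν = ⊤)
    (X : Ω → ℝ) (hX : Measurable X)
    (p : ℝ → ℝ) (hp : Continuous p) (hpb : ∃ C : ℝ, ∀ x, |p x| ≤ C)
    (hmap : Measure.map X P =
      MeasureTheory.volume.withDensity fun x => ENNReal.ofReal (p x))
    (c : ℝ) (hpc : 0 < p c) (T : ℝ) (hT : 0 < T) :
    ∫⁻ s in Set.Ioc (0 : ℝ) T, ∫⁻ x : ℝ,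
      (∫⁻ ω, ENNReal.ofReal
        (((if c ≤ X ω + x then (1 : ℝ) else 0) - (if c ≤ X ω then 1 else 0)) ^ 2) ∂P) ∂ν
      = ⊤ := by
  -- choose ε with p ≥ p c / 2 on the ε-ball around c
  have hopen : IsOpen {y : ℝ | p c / 2 < p y} := isOpen_lt continuous_const hp
  obtain ⟨ε, hε0, hεball⟩ := Metric.isOpen_iff.1 hopen c
    (show p c / 2 < p c from half_lt_self hpc)
  set ε' : ℝ := min ε 1 with hε'def
  have hε'0 : 0 < ε' := lt_min hε0 one_pos
  have hε'1 : ε' ≤ 1 := min_le_right _ _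
  have hεp : ∀ y : ℝ, |y - c| < ε' → p c / 2 ≤ p y := by
    intro y hy
    have : y ∈ Metric.ball c ε := by
      rw [Metric.mem_ball, Real.dist_eq]
      exact lt_of_lt_of_le hy (min_le_left _ _)
    exact le_of_lt (hεball this)
  set A : Set ℝ := Ioo (-ε') ε' \ {0} with hAdef
  set B : Set ℝ := Icc (-1 : ℝ) 1 \ Ioo (-ε') ε' with hBdef
  have hAmeas : MeasurableSet A := (measurableSet_Ioo).diff (measurableSet_singleton 0)
  have hBmeas : MeasurableSet B := measurableSet_Icc.diff measurableSet_Ioo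
  -- ν B is finite
  have hνB : ν B < ⊤ := by
    by_contra h
    push_neg at h
    have hBtop : ν B = ⊤ := top_le_iff.1 h
    have hcpos : (0 : ℝ) < min (ε' ^ 2) 1 := lt_min (pow_pos hε'0 2) one_pos
    have key : (⊤ : ℝ≥0∞) ≤ ∫⁻ x : ℝ, ENNReal.ofReal (min (x ^ 2) 1) ∂ν := by
      calc (⊤ : ℝ≥0∞) = ENNReal.ofReal (min (ε' ^ 2) 1) * ν B := by
            rw [hBtop, ENNReal.mul_top (by simp only [ne_eq, ENNReal.ofReal_eq_zero, not_le]; exact hcpos)]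
        _ = ∫⁻ _ in B, ENNReal.ofReal (min (ε' ^ 2) 1) ∂ν := by
            rw [setLIntegral_const]
        _ ≤ ∫⁻ x in B, ENNReal.ofReal (min (x ^ 2) 1) ∂ν := by
            apply setLIntegral_mono
            · exact ((measurable_id.pow_const 2).min measurable_const).ennreal_ofReal
            · intro x hx
              obtain ⟨hx1, hx2⟩ := hx
              have hxabs : ε' ≤ |x| := by
                rw [Set.mem_Ioo, not_and_or, not_lt, not_lt] at hx2
                rcases hx2 with h1 | h1
                · exact le_abs.2 (Or.inr (by linarith))
                · exact le_abs.2 (Or.inl h1)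
              have : ε' ^ 2 ≤ x ^ 2 := by
                have := sq_abs x
                nlinarith [abs_nonneg x, hε'0.le]
              exact ENNReal.ofReal_le_ofReal (min_le_min this le_rfl)
        _ ≤ ∫⁻ x : ℝ, ENNReal.ofReal (min (x ^ 2) 1) ∂ν := setLIntegral_le_lintegral _ _
    exact absurd hν1 (not_lt.2 key)
  -- the |x| integral over B is finite
  have hB : ∫⁻ x in B, ENNReal.ofReal |x| ∂ν < ⊤ := by
    calc ∫⁻ x in B, ENNReal.ofReal |x| ∂ν ≤ ∫⁻ _ in B, 1 ∂ν := by
          apply setLIntegral_mono measurable_const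
          intro x hx
          have : |x| ≤ 1 := abs_le.2 ⟨hx.1.1, hx.1.2⟩
          simpa using ENNReal.ofReal_le_ofReal this
      _ = ν B := by simp
      _ < ⊤ := hνB
  -- the |x| integral over A diverges
  have hA : ∫⁻ x in A, ENNReal.ofReal |x| ∂ν = ⊤ := by
    by_contra h
    have hsub : Icc (-1 : ℝ) 1 \ {0} ⊆ A ∪ B := by
      intro x hx
      by_cases hmem : x ∈ Ioo (-ε') ε'
      · exact Or.inl ⟨hmem, hx.2⟩
      · exact Or.inr ⟨hx.1, hmem⟩
    have : (⊤ : ℝ≥0∞) ≤ (∫⁻ x in A, ENNReal.ofReal |x| ∂ν) + ∫⁻ x in B, ENNReal.ofReal |x| ∂ν := by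
      calc (⊤ : ℝ≥0∞) = ∫⁻ x in Icc (-1 : ℝ) 1 \ {0}, ENNReal.ofReal |x| ∂ν := hνdiv.symm
        _ ≤ ∫⁻ x in A ∪ B, ENNReal.ofReal |x| ∂ν := lintegral_mono_set hsub
        _ ≤ _ := lintegral_union_le _ _ _
    have hlt : (∫⁻ x in A, ENNReal.ofReal |x| ∂ν) + ∫⁻ x in B, ENNReal.ofReal |x| ∂ν < ⊤ :=
      ENNReal.add_lt_top.2 ⟨lt_top_iff_ne_top.2 h, hB⟩
    exact absurd (lt_of_le_of_lt this hlt) (by simp)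
  -- lower bound on the inner expectation for x ∈ A
  have hinner : ∀ x ∈ A,
      ENNReal.ofReal (p c / 2) * ENNReal.ofReal |x| ≤
      ∫⁻ ω, ENNReal.ofReal
        (((if c ≤ X ω + x then (1 : ℝ) else 0) - (if c ≤ X ω then 1 else 0)) ^ 2) ∂P := by
    rintro x ⟨⟨hx1, hx2⟩, hx0⟩
    simp only [mem_singleton_iff] at hx0
    have hxabs : |x| < ε' := abs_lt.2 ⟨hx1, hx2⟩
    set S : Set ℝ := Ico (min (c - x) c) (max (c - x) c) with hSdef
    have hSmeas : MeasurableSet S := measurableSet_Ico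
    set F : ℝ → ℝ≥0∞ := fun t =>
      ENNReal.ofReal (((if c ≤ t + x then (1 : ℝ) else 0) - (if c ≤ t then 1 else 0)) ^ 2)
      with hFdef
    have hFmeas : Measurable F := by
      apply Measurable.ennreal_ofReal
      apply Measurable.pow _ measurable_const
      exact Measurable.sub
        (Measurable.ite (measurableSet_le measurable_const (measurable_id.add_const x))
          measurable_const measurable_const)
        (Measurable.ite (measurableSet_le measurable_const measurable_id)
          measurable_const measurable_const)
    have hpmeas : Measurable fun t : ℝ => ENNReal.ofReal (p t) := hp.measurable.ennreal_ofReal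
    have hrw : ∫⁻ ω, ENNReal.ofReal
        (((if c ≤ X ω + x then (1 : ℝ) else 0) - (if c ≤ X ω then 1 else 0)) ^ 2) ∂P
        = ∫⁻ t, ENNReal.ofReal (p t) * F t ∂volume := by
      have := lintegral_map hFmeas hX (μ := P)
      rw [hmap] at this
      rw [← this, lintegral_withDensity_eq_lintegral_mul _ hpmeas hFmeas]
      rfl
    have hpt : ∀ t : ℝ, S.indicator (fun _ => ENNReal.ofReal (p c / 2)) t
        ≤ ENNReal.ofReal (p t) * F t := by
      intro t
      by_cases ht : t ∈ S
      · have htl := ht.1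
        have htr := ht.2
        have habs : |t - c| < ε' := by
          have h1 : c - |x| ≤ t := le_trans (le_min (by cases abs_cases x <;> linarith) (by
            have := abs_nonneg x; linarith)) htl
          have h2 : t < c + |x| := lt_of_lt_of_le htr (max_le (by cases abs_cases x <;> linarith)
            (by have := abs_nonneg x; linarith))
          rw [abs_lt]; constructor <;> linarith
        have hFt : F t = 1 := by
          rcases lt_or_gt_of_ne hx0 with hneg | hpos
          · have hmin : min (c - x) c = c := min_eq_right (by linarith)
            have hmax : max (c - x) c = c - x := max_eq_left (by linarith)
            rw [hmin] at htl; rw [hmax] at htr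
            have h1 : c ≤ t := htl
            have h2 : ¬ c ≤ t + x := by linarith
            simp [hFdef, h1, h2]
          · have hmin : min (c - x) c = c - x := min_eq_left (by linarith)
            have hmax : max (c - x) c = c := max_eq_right (by linarith)
            rw [hmin] at htl; rw [hmax] at htr
            have h1 : c ≤ t + x := by linarith
            have h2 : ¬ c ≤ t := by linarith
            simp [hFdef, h1, h2]
        rw [Set.indicator_of_mem ht, hFt, mul_one]
        exact ENNReal.ofReal_le_ofReal (hεp t habs)
      · rw [Set.indicator_of_notMem ht]; exact zero_le
    have hvolS : volume S = ENNReal.ofReal |x| := by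
      rw [hSdef, Real.volume_Ico]
      congr 1
      rw [max_sub_min_eq_abs]
      simp [abs_sub_comm]
    calc ENNReal.ofReal (p c / 2) * ENNReal.ofReal |x|
        = ENNReal.ofReal (p c / 2) * volume S := by rw [hvolS]
      _ = ∫⁻ _ in S, ENNReal.ofReal (p c / 2) ∂volume := (setLIntegral_const _ _).symm
      _ = ∫⁻ t, S.indicator (fun _ => ENNReal.ofReal (p c / 2)) t ∂volume :=
          (lintegral_indicator hSmeas _).symm
      _ ≤ ∫⁻ t, ENNReal.ofReal (p t) * F t ∂volume := lintegral_mono hpt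
      _ = _ := hrw.symm
  -- the ν-integral diverges
  have hnuint : ∫⁻ x : ℝ,
      (∫⁻ ω, ENNReal.ofReal
        (((if c ≤ X ω + x then (1 : ℝ) else 0) - (if c ≤ X ω then 1 else 0)) ^ 2) ∂P) ∂ν = ⊤ := by
    rw [eq_top_iff]
    have habsmeas : Measurable fun x : ℝ => ENNReal.ofReal |x| :=
      (_root_.continuous_abs.measurable).ennreal_ofReal
    calc (⊤ : ℝ≥0∞) = ENNReal.ofReal (p c / 2) * ∫⁻ x in A, ENNReal.ofReal |x| ∂ν := by
          rw [hA, ENNReal.mul_top (by simp [ENNReal.ofReal_eq_zero, not_le]; linarith)]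
      _ = ∫⁻ x in A, ENNReal.ofReal (p c / 2) * ENNReal.ofReal |x| ∂ν :=
          (lintegral_const_mul _ habsmeas).symm
      _ = ∫⁻ x, A.indicator (fun x => ENNReal.ofReal (p c / 2) * ENNReal.ofReal |x|) x ∂ν :=
          (lintegral_indicator hAmeas _).symm
      _ ≤ _ := by
          apply lintegral_mono
          intro x
          by_cases hx : x ∈ A
          · rw [Set.indicator_of_mem hx]; exact hinner x hx
          · rw [Set.indicator_of_notMem hx]; exact zero_le
  simp only [hnuint]
  rw [setLIntegral_const, Real.volume_Ioc]
  rw [ENNReal.top_mul (by simp [ENNReal.ofReal_eq_zero, not_le]; linarith)]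
end

section
/- Let ν be a Lévy measure on ℝ∖{0} with C₂ := ∫ (e^x − 1)² ν(dx) < ∞, let σ ≥ 0, μ ∈ ℝ, and define μ̂ := μ + σ²/2 + ∫ (e^x − 1 − x) ν(dx). Suppose 0 ≥ μ̂ > −σ² − C₂. Then the measure ν*(dx) := (1 − μ̂(e^x − 1)/(σ² + C₂)) ν(dx) is a (nonnegative) measure on ℝ∖{0} satisfying ∫ (x² ∧ 1) ν*(dx) < ∞, i.e. ν* is again a Lévy measure. -/
open MeasureTheory

/- The density is `1 + K (eˣ - 1)` with `K = -μ̂ / (σ² + C₂) ∈ [0, 1)`; it is nonnegative because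
`eˣ - 1 > -1`. Since `x² ∧ 1 ≤ 1`, AM-GM gives `(eˣ - 1)(x² ∧ 1) ≤ ((x² ∧ 1) + (eˣ - 1)²) / 2`, so
`∫ (x² ∧ 1) dν*` is bounded by `(1 + K/2) ∫ (x² ∧ 1) dν + (K/2) C₂`. -/

lemma one_add_mul_exp_sub_one_nonneg {K : ℝ} (hK₀ : 0 ≤ K) (hK₁ : K ≤ 1) (x : ℝ) :
    0 ≤ 1 + K * (Real.exp x - 1) := by
  nlinarith [Real.exp_pos x, mul_nonneg hK₀ (Real.exp_pos x).le]

lemma one_add_mul_mul_le {K M t : ℝ} (hK : 0 ≤ K) (hM₀ : 0 ≤ M) (hM₁ : M ≤ 1) :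
    (1 + K * t) * M ≤ (1 + K / 2) * M + K / 2 * t ^ 2 := by
  have amgm : 2 * t * M ≤ M + t ^ 2 := by nlinarith [sq_nonneg (t - M)]
  nlinarith [mul_le_mul_of_nonneg_left amgm hK]

lemma lintegral_withDensity_one_add_mul_lt_top {α : Type*} [MeasurableSpace α] (ν : Measure α)
    {w φ : α → ℝ} {K : ℝ} (hK : 0 ≤ K) (hw₀ : ∀ x, 0 ≤ w x) (hw₁ : ∀ x, w x ≤ 1)
    (hφ : Measurable φ) (hw : ∫⁻ x, ENNReal.ofReal (w x) ∂ν < ⊤)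
    (hφ2 : Integrable (fun x => φ x ^ 2) ν) :
    ∫⁻ x, ENNReal.ofReal (w x) ∂(ν.withDensity fun x => ENNReal.ofReal (1 + K * φ x)) < ⊤ := by
  have pointwise : ∀ x, ENNReal.ofReal (1 + K * φ x) * ENNReal.ofReal (w x) ≤
      ENNReal.ofReal (1 + K / 2) * ENNReal.ofReal (w x) +
        ENNReal.ofReal (K / 2) * ENNReal.ofReal (φ x ^ 2) := fun x => by
    rw [← ENNReal.ofReal_mul' (hw₀ x), ← ENNReal.ofReal_mul (by positivity),
      ← ENNReal.ofReal_mul (by positivity), ← ENNReal.ofReal_add (by nlinarith [hw₀ x])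
        (by positivity)]
    exact ENNReal.ofReal_le_ofReal (one_add_mul_mul_le hK (hw₀ x) (hw₁ x))
  calc ∫⁻ x, ENNReal.ofReal (w x) ∂(ν.withDensity fun x => ENNReal.ofReal (1 + K * φ x))
      ≤ ∫⁻ x, ENNReal.ofReal (1 + K * φ x) * ENNReal.ofReal (w x) ∂ν :=
        lintegral_withDensity_le_lintegral_mul ν (by fun_prop) _
    _ ≤ ∫⁻ x, (ENNReal.ofReal (1 + K / 2) * ENNReal.ofReal (w x) +
          ENNReal.ofReal (K / 2) * ENNReal.ofReal (φ x ^ 2)) ∂ν := lintegral_mono pointwise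
    _ = ENNReal.ofReal (1 + K / 2) * ∫⁻ x, ENNReal.ofReal (w x) ∂ν +
          ENNReal.ofReal (K / 2) * ∫⁻ x, ENNReal.ofReal (φ x ^ 2) ∂ν := by
        rw [lintegral_add_right _ (by fun_prop), lintegral_const_mul' _ _ ENNReal.ofReal_ne_top,
          lintegral_const_mul' _ _ ENNReal.ofReal_ne_top]
    _ < ⊤ := ENNReal.add_lt_top.mpr
        ⟨ENNReal.mul_lt_top ENNReal.ofReal_lt_top hw,
          ENNReal.mul_lt_top ENNReal.ofReal_lt_top hφ2.lintegral_lt_top⟩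

theorem stmt_14_general (ν : Measure ℝ)
    (hνLevy : ∫⁻ x : ℝ, ENNReal.ofReal (min (x ^ 2) 1) ∂ν < ⊤)
    (hC2 : Integrable (fun x : ℝ => (Real.exp x - 1) ^ 2) ν)
    (σ μ : ℝ)
    (hhatμ₁ : μ + σ ^ 2 / 2 + ∫ x, (Real.exp x - 1 - x) ∂ν ≤ 0)
    (hhatμ₂ : -(σ ^ 2 + ∫ x, (Real.exp x - 1) ^ 2 ∂ν) <
      μ + σ ^ 2 / 2 + ∫ x, (Real.exp x - 1 - x) ∂ν) :
    (∀ x : ℝ, 0 ≤ 1 - (μ + σ ^ 2 / 2 + ∫ y, (Real.exp y - 1 - y) ∂ν) * (Real.exp x - 1)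
        / (σ ^ 2 + ∫ y, (Real.exp y - 1) ^ 2 ∂ν)) ∧
    ∫⁻ x : ℝ, ENNReal.ofReal (min (x ^ 2) 1)
      ∂(ν.withDensity fun x => ENNReal.ofReal
        (1 - (μ + σ ^ 2 / 2 + ∫ y, (Real.exp y - 1 - y) ∂ν) * (Real.exp x - 1)
          / (σ ^ 2 + ∫ y, (Real.exp y - 1) ^ 2 ∂ν))) < ⊤ := by
  set hatμ := μ + σ ^ 2 / 2 + ∫ x, (Real.exp x - 1 - x) ∂ν
  set S := σ ^ 2 + ∫ x, (Real.exp x - 1) ^ 2 ∂ν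
  have hS : 0 < S := by linarith
  have density_eq : ∀ x, 1 - hatμ * (Real.exp x - 1) / S = 1 + (-hatμ / S) * (Real.exp x - 1) :=
    fun x => by ring
  have hK₀ : 0 ≤ -hatμ / S := div_nonneg (by linarith) hS.le
  have hK₁ : -hatμ / S ≤ 1 := (div_le_one hS).mpr (by linarith)
  simp only [density_eq]
  exact ⟨one_add_mul_exp_sub_one_nonneg hK₀ hK₁,
    lintegral_withDensity_one_add_mul_lt_top ν hK₀ (fun x => le_min (sq_nonneg x) zero_le_one)
      (fun x => min_le_right _ _) (by fun_prop) hνLevy hC2⟩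

/-- The minimal-martingale-measure Lévy measure
`ν*(dx) = (1 - μ̂(e^x - 1)/(σ² + C₂)) ν(dx)` is again a Lévy measure: its density is
nonnegative and `∫ (x² ∧ 1) ν*(dx) < ∞`, where `C₂ = ∫ (e^x - 1)² ν(dx)` and
`μ̂ = μ + σ²/2 + ∫ (e^x - 1 - x) ν(dx)` satisfies `0 ≥ μ̂ > -σ² - C₂`. -/
theorem stmt_14 (ν : Measure ℝ) (hν0 : ν {0} = 0)
    (hνLevy : ∫⁻ x : ℝ, ENNReal.ofReal (min (x ^ 2) 1) ∂ν < ⊤)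
    (hC2 : Integrable (fun x : ℝ => (Real.exp x - 1) ^ 2) ν)
    (hμint : Integrable (fun x : ℝ => Real.exp x - 1 - x) ν)
    (σ μ : ℝ) (hσ : 0 ≤ σ)
    (hhatμ₁ : μ + σ ^ 2 / 2 + ∫ x, (Real.exp x - 1 - x) ∂ν ≤ 0)
    (hhatμ₂ : -(σ ^ 2 + ∫ x, (Real.exp x - 1) ^ 2 ∂ν) <
      μ + σ ^ 2 / 2 + ∫ x, (Real.exp x - 1 - x) ∂ν) :
    (∀ x : ℝ, 0 ≤ 1 - (μ + σ ^ 2 / 2 + ∫ y, (Real.exp y - 1 - y) ∂ν) * (Real.exp x - 1)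
        / (σ ^ 2 + ∫ y, (Real.exp y - 1) ^ 2 ∂ν)) ∧
    ∫⁻ x : ℝ, ENNReal.ofReal (min (x ^ 2) 1)
      ∂(ν.withDensity fun x => ENNReal.ofReal
        (1 - (μ + σ ^ 2 / 2 + ∫ y, (Real.exp y - 1 - y) ∂ν) * (Real.exp x - 1)
          / (σ ^ 2 + ∫ y, (Real.exp y - 1) ^ 2 ∂ν))) < ⊤ :=
  stmt_14_general ν hνLevy hC2 σ μ hhatμ₁ hhatμ₂
end
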